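/- arXiv:2412.13036 — 4 statements merged into one kernel-verified Lean document; each statement's English description precedes it below -/
import Mathlib

section
/- Let P and Q be probability measures on a measurable space Ω and let ℓ : Ω → ℝ be a measurable function with 0 ≤ ℓ(ω) ≤ C for all ω, where C ≥ 0 is a constant. Then ∫ ℓ dQ ≤ ∫ ℓ dP + √2 · C · (D_JS(Q ‖ P))^{1/2}. (Appendix Lemma 1: the expected error under one distribution is bounded by the expected error under the other plus √2·C times the square root of their Jensen–Shannon divergence.) -/
open MeasureTheory ProbabilityTheory Real
open scoped ENNReal

/-- Kullback–Leibler divergence `KL(P ‖ Q)`: `∫ log (dP/dQ) dP` when `P ≪ Q` (and the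
log-likelihood ratio is integrable), and `+∞` otherwise. -/
noncomputable def klDiv {Ω : Type*} [MeasurableSpace Ω] (P Q : Measure Ω) : ℝ≥0∞ :=
  open Classical in
  if P ≪ Q ∧ Integrable (llr P Q) P then ENNReal.ofReal (∫ ω, llr P Q ω ∂P) else ∞

/-- The midpoint measure `M = (1/2)·P + (1/2)·Q`. -/
noncomputable def midMeasure {Ω : Type*} [MeasurableSpace Ω] (P Q : Measure Ω) : Measure Ω :=
  (2⁻¹ : ℝ≥0∞) • P + (2⁻¹ : ℝ≥0∞) • Q

/-- Jensen–Shannon divergence `D_JS(P ‖ Q) = (1/2)·KL(P ‖ M) + (1/2)·KL(Q ‖ M)` where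
`M` is the midpoint measure. -/
noncomputable def jsDiv {Ω : Type*} [MeasurableSpace Ω] (P Q : Measure Ω) : ℝ≥0∞ :=
  2⁻¹ * klDiv P (midMeasure P Q) + 2⁻¹ * klDiv Q (midMeasure P Q)

/-! With `M = (P + Q) / 2` and `f = dQ/dM` we have `dP/dM = 2 - f` and `∫ (f - 1) dM = 0`, so
`∫ ℓ dQ - ∫ ℓ dP = ∫ (f - 1) (2ℓ - C) dM ≤ C ∫ |f - 1| dM ≤ C (∫ (f - 1)² dM) ^ (1/2)`,
because `|2ℓ - C| ≤ C`. The pointwise bound `(x - 1)² ≤ x log x + (2 - x) log (2 - x)` on `[0, 2]`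
(Pinsker's inequality for a coin against the fair coin) integrates to
`∫ (f - 1)² dM ≤ KL(Q ‖ M) + KL(P ‖ M) = 2 D_JS(Q ‖ P)`. -/

open Set

lemma two_mul_le_log_one_add_sub_log_one_sub {t : ℝ} (h0 : 0 ≤ t) (h1 : t < 1) :
    2 * t ≤ log (1 + t) - log (1 - t) := by
  have hs := hasSum_log_sub_log_of_abs_lt_one (abs_lt.2 ⟨by linarith, h1⟩)
  simpa using le_hasSum hs 0 fun k _ ↦ by positivity

lemma sq_le_one_add_mul_log_add_one_sub_mul_log {t : ℝ} (h0 : 0 ≤ t) (h1 : t ≤ 1) :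
    t ^ 2 ≤ (1 + t) * log (1 + t) + (1 - t) * log (1 - t) := by
  let ψ : ℝ → ℝ := fun t ↦ (1 + t) * log (1 + t) + (1 - t) * log (1 - t) - t ^ 2
  have hψ : MonotoneOn ψ (Icc 0 1) := by
    refine monotoneOn_of_hasDerivWithinAt_nonneg (convex_Icc 0 1)
      (f' := fun t ↦ log (1 + t) - log (1 - t) - 2 * t) ?_ ?_ ?_
    · exact ((continuous_mul_log.comp (continuous_const.add continuous_id)).add
        (continuous_mul_log.comp (continuous_const.sub continuous_id))).sub
        (continuous_pow 2) |>.continuousOn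
    · rw [interior_Icc]
      intro x hx
      have h1 := (hasDerivAt_mul_log (x := 1 + x) (by linarith [hx.1])).comp x
        ((hasDerivAt_id x).const_add 1)
      have h2 := (hasDerivAt_mul_log (x := 1 - x) (by linarith [hx.2])).comp x
        ((hasDerivAt_id x).const_sub 1)
      exact ((h1.add h2).sub (hasDerivAt_pow 2 x)).hasDerivWithinAt.congr_deriv (by ring)
    · rw [interior_Icc]
      intro x hx
      linarith [two_mul_le_log_one_add_sub_log_one_sub hx.1.le hx.2]
  simpa [ψ, sub_nonneg] using hψ ⟨le_rfl, zero_le_one⟩ ⟨h0, h1⟩ h0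

lemma sq_sub_one_le_mul_log_add_mul_log {x y : ℝ} (hx : 0 ≤ x) (hy : 0 ≤ y) (hxy : x + y = 2) :
    (x - 1) ^ 2 ≤ x * log x + y * log y := by
  wlog h : 1 ≤ x generalizing x y
  · have hyx : (y - 1) ^ 2 = (x - 1) ^ 2 := by rw [show y = 2 - x by linarith]; ring
    linarith [this hy hx (by linarith) (by linarith)]
  have := sq_le_one_add_mul_log_add_one_sub_mul_log (t := x - 1) (by linarith) (by linarith)
  rwa [add_sub_cancel, show 1 - (x - 1) = y by linarith] at this

section Integrability

variable {Ω : Type*} [MeasurableSpace Ω] {μ : Measure Ω}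

lemma integrable_comp_of_ae_mem_isCompact [IsFiniteMeasure μ] {f : Ω → ℝ} {φ : ℝ → ℝ}
    {s : Set ℝ} (hφ : Continuous φ) (hf : AEStronglyMeasurable f μ) (hs : IsCompact s)
    (hfs : ∀ᵐ ω ∂μ, f ω ∈ s) : Integrable (fun ω ↦ φ (f ω)) μ := by
  obtain ⟨K, hK⟩ := hs.exists_bound_of_continuousOn hφ.continuousOn
  exact .of_bound (hφ.comp_aestronglyMeasurable hf) K (hfs.mono fun ω h ↦ hK _ h)

lemma integral_le_sqrt_integral_sq [IsProbabilityMeasure μ] {X : Ω → ℝ} (hX : MemLp X 2 μ) :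
    ∫ ω, X ω ∂μ ≤ √(∫ ω, X ω ^ 2 ∂μ) := by
  have hvar := variance_eq_sub hX
  refine (le_abs_self _).trans (abs_le_sqrt ?_)
  have := variance_nonneg X μ
  simp only [Pi.pow_apply] at hvar
  linarith

lemma two_mul_integral_mul_le_mul_integral_abs {g ℓ : Ω → ℝ} {C : ℝ} (hg : Integrable g μ)
    (hg0 : ∫ ω, g ω ∂μ = 0) (hℓ : AEStronglyMeasurable ℓ μ) (hℓ0 : ∀ ω, 0 ≤ ℓ ω)
    (hℓC : ∀ ω, ℓ ω ≤ C) :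
    2 * ∫ ω, g ω * ℓ ω ∂μ ≤ C * ∫ ω, |g ω| ∂μ := by
  have hbound : ∀ ω, |2 * ℓ ω - C| ≤ C := fun ω ↦
    abs_le.2 ⟨by linarith [hℓ0 ω], by linarith [hℓC ω]⟩
  have hgℓ : Integrable (fun ω ↦ g ω * (2 * ℓ ω - C)) μ :=
    hg.mul_bdd ((hℓ.const_mul 2).sub aestronglyMeasurable_const) (.of_forall hbound)
  have hcenter : 2 * ∫ ω, g ω * ℓ ω ∂μ = ∫ ω, g ω * (2 * ℓ ω - C) ∂μ := by
    have hgℓ' : Integrable (fun ω ↦ g ω * ℓ ω) μ :=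
      hg.mul_bdd hℓ (.of_forall fun ω ↦ by rw [norm_of_nonneg (hℓ0 ω)]; exact hℓC ω)
    calc 2 * ∫ ω, g ω * ℓ ω ∂μ = ∫ ω, 2 * (g ω * ℓ ω) - C * g ω ∂μ := by
          rw [integral_sub (hgℓ'.const_mul 2) (hg.const_mul C), integral_const_mul,
            integral_const_mul, hg0, mul_zero, sub_zero]
      _ = ∫ ω, g ω * (2 * ℓ ω - C) ∂μ := by congr 1; ext ω; ring
  rw [hcenter, ← integral_const_mul]
  refine integral_mono hgℓ (hg.abs.const_mul C) fun ω ↦ ?_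
  calc g ω * (2 * ℓ ω - C) ≤ |g ω| * |2 * ℓ ω - C| := by rw [← abs_mul]; exact le_abs_self _
    _ ≤ |g ω| * C := by gcongr; exact hbound ω
    _ = C * |g ω| := mul_comm _ _

end Integrability

section MidMeasure

variable {Ω : Type*} [MeasurableSpace Ω] (P Q : Measure Ω)

instance [IsProbabilityMeasure P] [IsProbabilityMeasure Q] :
    IsProbabilityMeasure (midMeasure P Q) :=
  ⟨by simp [midMeasure, ENNReal.inv_two_add_inv_two]⟩

instance [IsFiniteMeasure P] [IsFiniteMeasure Q] : IsFiniteMeasure (midMeasure P Q) := by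
  have := P.smul_finite (c := 2⁻¹) (by simp)
  have := Q.smul_finite (c := 2⁻¹) (by simp)
  unfold midMeasure; infer_instance

lemma midMeasure_comm : midMeasure P Q = midMeasure Q P :=
  add_comm _ _

lemma absolutelyContinuous_midMeasure_left : P ≪ midMeasure P Q :=
  (Measure.absolutelyContinuous_smul (by norm_num)).add_right _

lemma absolutelyContinuous_midMeasure_right : Q ≪ midMeasure P Q :=
  midMeasure_comm Q P ▸ absolutelyContinuous_midMeasure_left Q P

lemma rnDeriv_midMeasure_add_rnDeriv_midMeasure [IsFiniteMeasure P] [IsFiniteMeasure Q] :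
    ∀ᵐ ω ∂midMeasure P Q,
      (P.rnDeriv (midMeasure P Q) ω).toReal + (Q.rnDeriv (midMeasure P Q) ω).toReal = 2 := by
  set M := midMeasure P Q
  have := P.smul_finite (c := 2⁻¹) (by simp)
  have := Q.smul_finite (c := 2⁻¹) (by simp)
  have hM : M.rnDeriv M =ᵐ[M] (2⁻¹ : ℝ≥0∞) • P.rnDeriv M + (2⁻¹ : ℝ≥0∞) • Q.rnDeriv M :=
    (Measure.rnDeriv_add' _ _ M).trans <| (Measure.rnDeriv_smul_left_of_ne_top P M (by simp)).add
      (Measure.rnDeriv_smul_left_of_ne_top Q M (by simp))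
  filter_upwards [Measure.rnDeriv_self M, hM, Measure.rnDeriv_lt_top P M,
    Measure.rnDeriv_lt_top Q M] with ω hone hsum hP hQ
  rw [hone] at hsum
  have := congrArg ENNReal.toReal hsum
  simp only [Pi.add_apply, Pi.smul_apply, smul_eq_mul, ENNReal.toReal_one] at this
  rw [ENNReal.toReal_add (by finiteness) (by finiteness)] at this
  simp only [ENNReal.toReal_mul, ENNReal.toReal_inv, ENNReal.toReal_ofNat] at this
  linarith

lemma rnDeriv_midMeasure_mem_Icc [IsFiniteMeasure P] [IsFiniteMeasure Q] :
    ∀ᵐ ω ∂midMeasure P Q, (P.rnDeriv (midMeasure P Q) ω).toReal ∈ Icc 0 2 :=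
  (rnDeriv_midMeasure_add_rnDeriv_midMeasure P Q).mono fun ω h ↦
    ⟨ENNReal.toReal_nonneg, by linarith [(Q.rnDeriv (midMeasure P Q) ω).toReal_nonneg]⟩

end MidMeasure

section ChangeOfMeasure

variable {Ω : Type*} [MeasurableSpace Ω]

lemma klDiv_eq_ofReal_integral_mul_log {P M : Measure Ω} [SigmaFinite P]
    [P.HaveLebesgueDecomposition M] (hPM : P ≪ M)
    (hint : Integrable (fun ω ↦ (P.rnDeriv M ω).toReal * log (P.rnDeriv M ω).toReal) M) :
    klDiv P M = .ofReal (∫ ω, (P.rnDeriv M ω).toReal * log (P.rnDeriv M ω).toReal ∂M) := by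
  rw [klDiv, if_pos ⟨hPM, (integrable_rnDeriv_mul_log_iff hPM).1 hint⟩,
    integral_rnDeriv_mul_log hPM]

lemma integral_sub_integral_eq_integral_rnDeriv_sub_mul {P Q M : Measure Ω} [SigmaFinite P]
    [SigmaFinite Q] [P.HaveLebesgueDecomposition M] [Q.HaveLebesgueDecomposition M]
    (hPM : P ≪ M) (hQM : Q ≪ M) {ℓ : Ω → ℝ} (hℓP : Integrable ℓ P) (hℓQ : Integrable ℓ Q) :
    ∫ ω, ℓ ω ∂P - ∫ ω, ℓ ω ∂Q
      = ∫ ω, ((P.rnDeriv M ω).toReal - (Q.rnDeriv M ω).toReal) * ℓ ω ∂M := by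
  rw [← integral_rnDeriv_smul hPM, ← integral_rnDeriv_smul hQM, ← integral_sub
    ((integrable_rnDeriv_smul_iff hPM).2 hℓP) ((integrable_rnDeriv_smul_iff hQM).2 hℓQ)]
  simp only [smul_eq_mul, sub_mul]

end ChangeOfMeasure

section JensenShannon

variable {Ω : Type*} [MeasurableSpace Ω] (P Q : Measure Ω)

lemma integral_sq_rnDeriv_midMeasure_sub_one_le_two_mul_jsDiv [IsFiniteMeasure P]
    [IsFiniteMeasure Q] :
    ∫ ω, ((P.rnDeriv (midMeasure P Q) ω).toReal - 1) ^ 2 ∂midMeasure P Q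
      ≤ 2 * (jsDiv P Q).toReal := by
  have hsum := rnDeriv_midMeasure_add_rnDeriv_midMeasure P Q
  have hP := rnDeriv_midMeasure_mem_Icc P Q
  have hQ : ∀ᵐ ω ∂midMeasure P Q, (Q.rnDeriv (midMeasure P Q) ω).toReal ∈ Icc 0 2 :=
    midMeasure_comm Q P ▸ rnDeriv_midMeasure_mem_Icc Q P
  set M := midMeasure P Q
  have hmP := (P.measurable_rnDeriv M).ennreal_toReal.aestronglyMeasurable (μ := M)
  have hmQ := (Q.measurable_rnDeriv M).ennreal_toReal.aestronglyMeasurable (μ := M)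
  have hintP := integrable_comp_of_ae_mem_isCompact continuous_mul_log hmP isCompact_Icc hP
  have hintQ := integrable_comp_of_ae_mem_isCompact continuous_mul_log hmQ isCompact_Icc hQ
  have hintSq := integrable_comp_of_ae_mem_isCompact
    ((continuous_pow 2).comp (continuous_sub_right 1)) hmP isCompact_Icc hP
  calc ∫ ω, ((P.rnDeriv M ω).toReal - 1) ^ 2 ∂M
      ≤ ∫ ω, ((P.rnDeriv M ω).toReal * log (P.rnDeriv M ω).toReal
          + (Q.rnDeriv M ω).toReal * log (Q.rnDeriv M ω).toReal) ∂M :=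
        integral_mono_ae hintSq (hintP.add hintQ) <| hsum.mono fun ω h ↦
          sq_sub_one_le_mul_log_add_mul_log ENNReal.toReal_nonneg ENNReal.toReal_nonneg h
    _ ≤ 2 * (jsDiv P Q).toReal := by
        rw [integral_add hintP hintQ, jsDiv,
          klDiv_eq_ofReal_integral_mul_log (absolutelyContinuous_midMeasure_left P Q) hintP,
          klDiv_eq_ofReal_integral_mul_log (absolutelyContinuous_midMeasure_right P Q) hintQ,
          ENNReal.toReal_add (by finiteness) (by finiteness)]
        simp only [ENNReal.toReal_mul, ENNReal.toReal_inv, ENNReal.toReal_ofNat,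
          ENNReal.toReal_ofReal']
        linarith [le_max_left (∫ ω, (P.rnDeriv M ω).toReal * log (P.rnDeriv M ω).toReal ∂M) 0,
          le_max_left (∫ ω, (Q.rnDeriv M ω).toReal * log (Q.rnDeriv M ω).toReal ∂M) 0]

lemma integral_sub_integral_le_mul_integral_abs_rnDeriv_midMeasure_sub_one
    [IsProbabilityMeasure P] [IsProbabilityMeasure Q] {ℓ : Ω → ℝ} (hℓ : Measurable ℓ) {C : ℝ}
    (hℓ0 : ∀ ω, 0 ≤ ℓ ω) (hℓC : ∀ ω, ℓ ω ≤ C) :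
    ∫ ω, ℓ ω ∂P - ∫ ω, ℓ ω ∂Q
      ≤ C * ∫ ω, |(P.rnDeriv (midMeasure P Q) ω).toReal - 1| ∂midMeasure P Q := by
  have hsum := rnDeriv_midMeasure_add_rnDeriv_midMeasure P Q
  set M := midMeasure P Q
  have hPM := absolutelyContinuous_midMeasure_left P Q
  have hbound : ∀ ω, ‖ℓ ω‖ ≤ C := fun ω ↦ by rw [norm_of_nonneg (hℓ0 ω)]; exact hℓC ω
  have hint : ∀ μ : Measure Ω, [IsFiniteMeasure μ] → Integrable ℓ μ := fun μ _ ↦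
    .of_bound hℓ.aestronglyMeasurable C (.of_forall hbound)
  have hcentered : ∫ ω, ((P.rnDeriv M ω).toReal - 1) ∂M = 0 := by
    rw [integral_sub Measure.integrable_toReal_rnDeriv (integrable_const 1),
      Measure.integral_toReal_rnDeriv hPM]
    simp
  rw [integral_sub_integral_eq_integral_rnDeriv_sub_mul hPM
    (absolutelyContinuous_midMeasure_right P Q) (hint P) (hint Q)]
  calc ∫ ω, ((P.rnDeriv M ω).toReal - (Q.rnDeriv M ω).toReal) * ℓ ω ∂M
      = 2 * ∫ ω, ((P.rnDeriv M ω).toReal - 1) * ℓ ω ∂M := by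
        rw [← integral_const_mul]
        refine integral_congr_ae <| hsum.mono fun ω h ↦ ?_
        dsimp only
        rw [show (Q.rnDeriv M ω).toReal = 2 - (P.rnDeriv M ω).toReal by linarith]
        ring
    _ ≤ C * ∫ ω, |(P.rnDeriv M ω).toReal - 1| ∂M :=
        two_mul_integral_mul_le_mul_integral_abs
          (Measure.integrable_toReal_rnDeriv.sub (integrable_const 1)) hcentered
          hℓ.aestronglyMeasurable hℓ0 hℓC

end JensenShannon

/-- Appendix Lemma 1: for probability measures `P, Q` and a measurable loss `ℓ` with
`0 ≤ ℓ ≤ C`, the expected loss under `Q` is bounded by the expected loss under `P`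
plus `√2 · C · √(D_JS(Q ‖ P))`. -/
theorem expected_error_le_add_sqrt_jsDiv
    {Ω : Type*} [MeasurableSpace Ω] (P Q : Measure Ω)
    [IsProbabilityMeasure P] [IsProbabilityMeasure Q]
    (ℓ : Ω → ℝ) (hℓ : Measurable ℓ) (C : ℝ) (hC : 0 ≤ C)
    (hℓ0 : ∀ ω, 0 ≤ ℓ ω) (hℓC : ∀ ω, ℓ ω ≤ C) :
    ∫ ω, ℓ ω ∂Q ≤ ∫ ω, ℓ ω ∂P + Real.sqrt 2 * C * Real.sqrt ((jsDiv Q P).toReal) := by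
  set M := midMeasure Q P
  have hL2 : MemLp (fun ω ↦ |(Q.rnDeriv M ω).toReal - 1|) 2 M :=
    .of_bound ((Q.measurable_rnDeriv M).ennreal_toReal.sub_const 1).abs.aestronglyMeasurable 1 <|
      (rnDeriv_midMeasure_mem_Icc Q P).mono fun ω h ↦ by
        rw [Real.norm_eq_abs, abs_abs, abs_le]; constructor <;> linarith [h.1, h.2]
  have hTV := integral_sub_integral_le_mul_integral_abs_rnDeriv_midMeasure_sub_one Q P hℓ hℓ0 hℓC
  have hJS := integral_sq_rnDeriv_midMeasure_sub_one_le_two_mul_jsDiv Q P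
  calc ∫ ω, ℓ ω ∂Q
      ≤ ∫ ω, ℓ ω ∂P + C * ∫ ω, |(Q.rnDeriv M ω).toReal - 1| ∂M := by linarith
    _ ≤ ∫ ω, ℓ ω ∂P + C * √(∫ ω, ((Q.rnDeriv M ω).toReal - 1) ^ 2 ∂M) := by
        gcongr
        simpa only [sq_abs] using integral_le_sqrt_integral_sq hL2
    _ ≤ ∫ ω, ℓ ω ∂P + C * √(2 * (jsDiv Q P).toReal) := by gcongr
    _ = ∫ ω, ℓ ω ∂P + √2 * C * √((jsDiv Q P).toReal) := by
        rw [Real.sqrt_mul zero_le_two]; ring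
end

section
/- Let P and Q be probability measures on a measurable space Ω with Q ≪ P, and let ℓ : Ω → ℝ be a measurable function with 0 ≤ ℓ(ω) ≤ C for all ω, where C ≥ 0 is a constant. Then ∫ ℓ dQ ≤ ∫ ℓ dP + (C/√2) · (KL(Q ‖ P))^{1/2}. -/
open MeasureTheory ProbabilityTheory Real
open scoped ENNReal

/-!
Gibbs' inequality applied to `Q` and the exponential tilt of `P` by `g` gives the
Donsker–Varadhan bound `∫ g dQ ≤ KL(Q ‖ P) + log ∫ exp g dP`. Taking `g = t (ℓ - ∫ ℓ dP)` and
bounding the moment generating function by Hoeffding's lemma yields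
`t (∫ ℓ dQ - ∫ ℓ dP) ≤ KL(Q ‖ P) + C² t² / 8` for every real `t`; the best choice of `t`
turns this quadratic bound into `(∫ ℓ dQ - ∫ ℓ dP)² ≤ C² KL(Q ‖ P) / 2`.
-/

open Set

theorem integral_le_integral_llr_add_log_integral_exp {Ω : Type*} [MeasurableSpace Ω]
    {P Q : Measure Ω} [IsProbabilityMeasure P] [IsProbabilityMeasure Q]
    (hQP : Q ≪ P) (h_int : Integrable (llr Q P) Q) {g : Ω → ℝ}
    (hgQ : Integrable g Q) (hgP : Integrable (fun ω ↦ exp (g ω)) P) :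
    ∫ ω, g ω ∂Q ≤ ∫ ω, llr Q P ω ∂Q + log (∫ ω, exp (g ω) ∂P) := by
  have := isProbabilityMeasure_tilted hgP
  have h_gibbs := InformationTheory.integral_llr_add_sub_measure_univ_nonneg
    (hQP.trans (absolutelyContinuous_tilted hgP)) (integrable_llr_tilted_right hQP hgQ h_int hgP)
  rw [integral_llr_tilted_right hQP hgQ hgP h_int] at h_gibbs
  simp only [probReal_univ, add_sub_cancel_right] at h_gibbs
  linarith

theorem mul_integral_sub_integral_le_integral_llr_add {Ω : Type*} [MeasurableSpace Ω]
    {P Q : Measure Ω} [IsProbabilityMeasure P] [IsProbabilityMeasure Q]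
    (hQP : Q ≪ P) (h_int : Integrable (llr Q P) Q) {ℓ : Ω → ℝ} {a b : ℝ}
    (hm : AEMeasurable ℓ P) (hb : ∀ᵐ ω ∂P, ℓ ω ∈ Icc a b) (t : ℝ) :
    t * (∫ ω, ℓ ω ∂Q - ∫ ω, ℓ ω ∂P) ≤ ∫ ω, llr Q P ω ∂Q + (b - a) ^ 2 / 8 * t ^ 2 := by
  have h_hoeffding := hasSubgaussianMGF_of_mem_Icc hm hb
  have hℓQ : Integrable ℓ Q := Integrable.of_mem_Icc a b (hm.mono_ac hQP) (hQP.ae_le hb)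
  calc t * (∫ ω, ℓ ω ∂Q - ∫ ω, ℓ ω ∂P)
      = ∫ ω, t * (ℓ ω - ∫ ω', ℓ ω' ∂P) ∂Q := by
        rw [integral_const_mul, integral_sub hℓQ (integrable_const _), integral_const,
          probReal_univ, one_smul]
    _ ≤ ∫ ω, llr Q P ω ∂Q + log (mgf (fun ω ↦ ℓ ω - ∫ ω', ℓ ω' ∂P) P t) :=
        integral_le_integral_llr_add_log_integral_exp hQP h_int
          ((hℓQ.sub (integrable_const _)).const_mul t) (h_hoeffding.integrable_exp_mul t)
    _ ≤ ∫ ω, llr Q P ω ∂Q + (b - a) ^ 2 / 8 * t ^ 2 := by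
        grw [h_hoeffding.mgf_le t, log_exp]
        · refine le_of_eq ?_
          simp only [NNReal.coe_pow, NNReal.coe_div, NNReal.coe_ofNat, coe_nnnorm, norm_eq_abs,
            div_pow, sq_abs]
          ring
        · exact mgf_pos (h_hoeffding.integrable_exp_mul t)

theorem le_sqrt_of_forall_mul_le_add_mul_sq {d K c : ℝ} (hc : 0 < c)
    (h : ∀ t, t * d ≤ K + c * t ^ 2) : d ≤ √(4 * c * K) := by
  refine le_sqrt_of_sq_le ?_
  have := h (d / (2 * c))
  field_simp at this
  nlinarith

theorem integral_le_integral_add_mul_sqrt_integral_llr {Ω : Type*} [MeasurableSpace Ω]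
    {P Q : Measure Ω} [IsProbabilityMeasure P] [IsProbabilityMeasure Q]
    (hQP : Q ≪ P) (h_int : Integrable (llr Q P) Q) {ℓ : Ω → ℝ} {a b : ℝ} (hab : a < b)
    (hm : AEMeasurable ℓ P) (hb : ∀ᵐ ω ∂P, ℓ ω ∈ Icc a b) :
    ∫ ω, ℓ ω ∂Q ≤ ∫ ω, ℓ ω ∂P + (b - a) / √2 * √(∫ ω, llr Q P ω ∂Q) := by
  have h_sq := le_sqrt_of_forall_mul_le_add_mul_sq (by positivity : 0 < (b - a) ^ 2 / 8)
    (mul_integral_sub_integral_le_integral_llr_add hQP h_int hm hb)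
  have h_const : 4 * ((b - a) ^ 2 / 8) = ((b - a) / √2) ^ 2 := by
    rw [div_pow, sq_sqrt zero_le_two]
    ring
  rw [h_const, sqrt_mul (sq_nonneg _), sqrt_sq (div_nonneg (sub_nonneg.2 hab.le) (sqrt_nonneg 2))] at h_sq
  linarith

/-- For probability measures `Q ≪ P` and a measurable loss `ℓ` with `0 ≤ ℓ ≤ C`,
`∫ ℓ dQ ≤ ∫ ℓ dP + (C/√2) · (KL(Q ‖ P))^{1/2}` (as extended nonnegative reals, so that
the bound is trivial when the divergence is infinite). -/
theorem expected_error_le_add_sqrt_klDiv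
    {Ω : Type*} [MeasurableSpace Ω] (P Q : Measure Ω)
    [IsProbabilityMeasure P] [IsProbabilityMeasure Q]
    (ℓ : Ω → ℝ) (hℓ : Measurable ℓ) (C : ℝ) (hC : 0 ≤ C)
    (hℓ0 : ∀ ω, 0 ≤ ℓ ω) (hℓC : ∀ ω, ℓ ω ≤ C)
    (hQP : Q ≪ P) :
    ENNReal.ofReal (∫ ω, ℓ ω ∂Q) ≤
      ENNReal.ofReal (∫ ω, ℓ ω ∂P)
        + ENNReal.ofReal (C / Real.sqrt 2) * (klDiv Q P) ^ (1/2 : ℝ) := by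
  rcases hC.eq_or_lt with rfl | hC_pos
  · have hℓ_zero : ∀ ω, ℓ ω = 0 := fun ω ↦ le_antisymm (hℓC ω) (hℓ0 ω)
    simp [hℓ_zero]
  by_cases h_int : Integrable (llr Q P) Q
  · have h_real := integral_le_integral_add_mul_sqrt_integral_llr hQP h_int hC_pos
      hℓ.aemeasurable (ae_of_all _ fun ω ↦ ⟨hℓ0 ω, hℓC ω⟩)
    have h_gibbs : 0 ≤ ∫ ω, llr Q P ω ∂Q := by
      simpa using InformationTheory.integral_llr_add_sub_measure_univ_nonneg hQP h_int
    rw [klDiv, if_pos ⟨hQP, h_int⟩, ENNReal.ofReal_rpow_of_nonneg h_gibbs (by norm_num),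
      ← sqrt_eq_rpow, ← ENNReal.ofReal_mul (by positivity),
      ← ENNReal.ofReal_add (integral_nonneg hℓ0) (by positivity)]
    exact ENNReal.ofReal_le_ofReal (by simpa using h_real)
  · rw [klDiv, if_neg (fun h ↦ h_int h.2), ENNReal.top_rpow_of_pos (by norm_num),
      ENNReal.mul_top (by simpa using div_pos hC_pos (sqrt_pos.2 two_pos))]
    simp
end

section
/- Let P and Q be probability measures on a measurable space Ω, let M = (1/2)·P + (1/2)·Q be their midpoint measure, and let ℓ : Ω → ℝ be a measurable function with 0 ≤ ℓ(ω) ≤ C for all ω, where C ≥ 0 is a constant. Then ∫ ℓ dQ ≤ ∫ ℓ dP + (C/√2) · ((KL(Q ‖ M))^{1/2} + (KL(P ‖ M))^{1/2}). -/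
/-!
The densities of `P` and `Q` with respect to the midpoint `M` take values in `[0, 2]`, so both
divergences `KL(P ‖ M)` and `KL(Q ‖ M)` are finite. For a probability measure `μ ≪ M` with
density `g`, we have `∫ ℓ dμ - ∫ ℓ dM = ∫ (ℓ - C/2) (g - 1) dM`, which is at most
`C/2 · ∫ |g - 1| dM`, and Pinsker's inequality `∫ |g - 1| dM ≤ √(2 KL(μ ‖ M))` turns this into
`C/√2 · √KL(μ ‖ M)`; inserting `M` between `Q` and `P` gives the claim. Pinsker's inequality
follows from Cauchy–Schwarz applied to `|g - 1| = |g - 1| / √(g + 2) · √(g + 2)`, the pointwise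
bound `3 (t - 1)² ≤ 2 (t + 2) (t log t - t + 1)`, and `∫ (g + 2) dM = 3`.
-/

open MeasureTheory ProbabilityTheory Real
open scoped ENNReal

open Set
open InformationTheory (klFun hasDerivAt_klFun klFun_one continuous_klFun measurable_klFun
  integrable_klFun_rnDeriv_iff toReal_klDiv_eq_integral_klFun)

lemma sq_sub_one_le_mul_klFun {t : ℝ} (ht : 0 ≤ t) :
    3 * (t - 1) ^ 2 ≤ 2 * (t + 2) * klFun t := by
  have hderiv {x : ℝ} (hx : x ≠ 0) :
      HasDerivAt (fun y ↦ 2 * (y + 2) * klFun y - 3 * (y - 1) ^ 2)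
        (2 * klFun x + 2 * (x + 2) * log x - 6 * (x - 1)) x := by
    refine ((((hasDerivAt_id x).add_const 2).const_mul 2).mul (hasDerivAt_klFun hx)).sub
      (((hasDerivAt_id x).sub_const 1).pow 2 |>.const_mul 3) |>.congr_deriv ?_
    simp only [id, Nat.cast_ofNat]
    ring
  have hderiv2 {x : ℝ} (hx : x ≠ 0) :
      HasDerivAt (fun y ↦ 2 * klFun y + 2 * (y + 2) * log y - 6 * (y - 1))
        (4 * log x + 4 / x - 4) x := by
    refine ((hasDerivAt_klFun hx).const_mul 2).add
      ((((hasDerivAt_id x).add_const 2).const_mul 2).mul (hasDerivAt_log hx))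
      |>.sub (((hasDerivAt_id x).sub_const 1).const_mul 6) |>.congr_deriv ?_
    simp only [id]
    field_simp
    ring
  have hconvex : ConvexOn ℝ (Ici 0) (fun y ↦ 2 * (y + 2) * klFun y - 3 * (y - 1) ^ 2) := by
    refine convexOn_of_hasDerivWithinAt2_nonneg (convex_Ici 0) (by fun_prop)
      (f' := fun x ↦ 2 * klFun x + 2 * (x + 2) * log x - 6 * (x - 1))
      (f'' := fun x ↦ 4 * log x + 4 / x - 4)
      (fun x hx ↦ ?_) (fun x hx ↦ ?_) (fun x hx ↦ ?_) <;> rw [interior_Ici] at hx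
    · exact (hderiv hx.ne').hasDerivWithinAt
    · exact (hderiv2 hx.ne').hasDerivWithinAt
    · have := one_sub_inv_le_log_of_pos hx
      rw [div_eq_mul_inv]
      linarith
  have hstationary :
      derivWithin (fun y ↦ 2 * (y + 2) * klFun y - 3 * (y - 1) ^ 2) (Ioi 1) 1 = 0 :=
    (hderiv one_ne_zero).hasDerivWithinAt.derivWithin (uniqueDiffWithinAt_Ioi 1) |>.trans
      (by simp [klFun_one])
  have hmin := hconvex.isMinOn_of_rightDeriv_eq_zero (by simp) hstationary (mem_Ici.2 ht)
  simp only [mem_ofPred_eq, klFun_one] at hmin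
  linarith

section

variable {α : Type*} {mα : MeasurableSpace α} {μ ν : Measure α}

lemma integral_mul_le_sqrt_mul_sqrt {f g : α → ℝ} (hf₀ : 0 ≤ᵐ[μ] f) (hg₀ : 0 ≤ᵐ[μ] g)
    (hf : MemLp f 2 μ) (hg : MemLp g 2 μ) :
    ∫ x, f x * g x ∂μ ≤ √(∫ x, f x ^ 2 ∂μ) * √(∫ x, g x ^ 2 ∂μ) := by
  have := integral_mul_le_Lp_mul_Lq_of_nonneg HolderConjugate.two_two hf₀ hg₀
    (by rwa [ENNReal.ofReal_ofNat]) (by rwa [ENNReal.ofReal_ofNat])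
  simpa only [rpow_two, ← sqrt_eq_rpow] using this

lemma rnDeriv_le_of_le_smul [SigmaFinite ν] {c : ℝ≥0∞} (h : μ ≤ c • ν) :
    μ.rnDeriv ν ≤ᵐ[ν] fun _ ↦ c :=
  ae_le_of_forall_setLIntegral_le_of_sigmaFinite (Measure.measurable_rnDeriv μ ν) fun s _ _ ↦
    (Measure.setLIntegral_rnDeriv_le s).trans <| (h s).trans_eq <| by simp

lemma integrable_llr_of_le_smul [IsFiniteMeasure μ] [IsFiniteMeasure ν] {c : ℝ≥0∞} (hc : c ≠ ∞)
    (h : μ ≤ c • ν) : Integrable (llr μ ν) μ := by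
  rw [← integrable_klFun_rnDeriv_iff (Measure.absolutelyContinuous_of_le_smul h)]
  obtain ⟨B, hB⟩ := (isCompact_Icc (a := 0) (b := c.toReal)).exists_bound_of_continuousOn
    continuous_klFun.continuousOn
  have h_meas := measurable_klFun.comp (Measure.measurable_rnDeriv μ ν).ennreal_toReal
  refine .of_bound h_meas.aestronglyMeasurable B ?_
  filter_upwards [rnDeriv_le_of_le_smul h] with x hx
  exact hB _ ⟨ENNReal.toReal_nonneg, ENNReal.toReal_mono hc hx⟩

lemma klDiv_eq_informationTheory_klDiv [IsFiniteMeasure μ] [IsFiniteMeasure ν]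
    (h : μ univ = ν univ) : klDiv μ ν = InformationTheory.klDiv μ ν := by
  rw [klDiv, InformationTheory.klDiv_def]
  simp [measureReal_def, h]

variable [IsProbabilityMeasure μ] [IsProbabilityMeasure ν]

theorem integral_abs_toReal_rnDeriv_sub_one_le_sqrt_klDiv (hμν : μ ≪ ν)
    (h_int : Integrable (llr μ ν) μ) :
    ∫ x, |(μ.rnDeriv ν x).toReal - 1| ∂ν ≤ √(2 * (InformationTheory.klDiv μ ν).toReal) := by
  set g : α → ℝ := fun x ↦ (μ.rnDeriv ν x).toReal
  have hg₀ : ∀ x, 0 ≤ g x := fun x ↦ ENNReal.toReal_nonneg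
  have hg₂ : ∀ x, 0 < g x + 2 := fun x ↦ by linarith [hg₀ x]
  have hg_int : Integrable g ν := Measure.integrable_toReal_rnDeriv
  have hg_one : ∫ x, g x ∂ν = 1 := by simp [g, Measure.integral_toReal_rnDeriv hμν]
  have hkl_int : Integrable (fun x ↦ klFun (g x)) ν := (integrable_klFun_rnDeriv_iff hμν).2 h_int
  have hkl : (InformationTheory.klDiv μ ν).toReal = ∫ x, klFun (g x) ∂ν :=
    toReal_klDiv_eq_integral_klFun hμν
  set u : α → ℝ := fun x ↦ |g x - 1| / √(g x + 2)
  set v : α → ℝ := fun x ↦ √(g x + 2)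
  have hu_sq : ∀ x, u x ^ 2 ≤ 2 / 3 * klFun (g x) := fun x ↦ by
    rw [div_pow, sq_abs, sq_sqrt (hg₂ x).le, div_le_iff₀ (hg₂ x)]
    linarith [sq_sub_one_le_mul_klFun (hg₀ x)]
  have hv_sq : ∀ x, v x ^ 2 = g x + 2 := fun x ↦ sq_sqrt (hg₂ x).le
  have hu : MemLp u 2 ν := by
    refine (memLp_two_iff_integrable_sq (by fun_prop)).2 <|
      (hkl_int.const_mul (2 / 3)).mono' (by fun_prop) (ae_of_all _ fun x ↦ ?_)
    rw [norm_of_nonneg (sq_nonneg _)]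
    exact hu_sq x
  have hv : MemLp v 2 ν := (memLp_two_iff_integrable_sq (by fun_prop)).2 <|
    (hg_int.add (integrable_const 2)).congr (ae_of_all _ fun x ↦ (hv_sq x).symm)
  calc ∫ x, |g x - 1| ∂ν = ∫ x, u x * v x ∂ν := by
        congr 1 with x
        exact (div_mul_cancel₀ _ (sqrt_pos.2 (hg₂ x)).ne').symm
    _ ≤ √(∫ x, u x ^ 2 ∂ν) * √(∫ x, v x ^ 2 ∂ν) :=
        integral_mul_le_sqrt_mul_sqrt (ae_of_all _ fun x ↦ by positivity)
          (ae_of_all _ fun x ↦ by positivity) hu hv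
    _ ≤ √(2 / 3 * ∫ x, klFun (g x) ∂ν) * √3 := by
        gcongr
        · rw [← integral_const_mul]
          exact integral_mono hu.integrable_sq (hkl_int.const_mul _) hu_sq
        · simp only [hv_sq]
          rw [integral_add hg_int (integrable_const 2), hg_one]
          norm_num
    _ = √(2 * (InformationTheory.klDiv μ ν).toReal) := by
        rw [hkl, ← sqrt_mul' _ zero_le_three]
        ring_nf

theorem abs_integral_sub_integral_le_of_mem_Icc (hμν : μ ≪ ν) {f : α → ℝ} (hf : Measurable f)
    {a b : ℝ} (hab : ∀ x, f x ∈ Icc a b) :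
    |∫ x, f x ∂μ - ∫ x, f x ∂ν| ≤ (b - a) / 2 * ∫ x, |(μ.rnDeriv ν x).toReal - 1| ∂ν := by
  set g : α → ℝ := fun x ↦ (μ.rnDeriv ν x).toReal
  set c := (a + b) / 2 with hc
  have hg_int : Integrable g ν := Measure.integrable_toReal_rnDeriv
  have hf_int : ∀ (ρ : Measure α) [IsFiniteMeasure ρ], Integrable f ρ := fun ρ _ ↦
    .of_bound hf.aestronglyMeasurable (max |a| |b|)
      (ae_of_all _ fun x ↦ abs_le_max_abs_abs (hab x).1 (hab x).2)
  have hfc : ∀ x, |f x - c| ≤ (b - a) / 2 := fun x ↦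
    abs_le.2 ⟨by linarith [(hab x).1], by linarith [(hab x).2]⟩
  have hdiff : ∫ x, f x ∂μ - ∫ x, f x ∂ν = ∫ x, (f x - c) * (g x - 1) ∂ν := by
    have hmul : ∫ x, g x * (f x - c) ∂ν = ∫ x, (f x - c) ∂μ := integral_rnDeriv_smul hμν
    have hmul_int : Integrable (fun x ↦ g x * (f x - c)) ν :=
      (integrable_toReal_rnDeriv_mul_iff hμν).2 ((hf_int μ).sub (integrable_const c))
    have hpt : ∀ x, (f x - c) * (g x - 1) = g x * (f x - c) - (f x - c) := fun x ↦ by ring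
    simp_rw [hpt]
    rw [integral_sub (g := fun x ↦ f x - c) hmul_int ((hf_int ν).sub (integrable_const c)), hmul,
      integral_sub (hf_int μ) (integrable_const c), integral_sub (hf_int ν) (integrable_const c)]
    simp
  calc |∫ x, f x ∂μ - ∫ x, f x ∂ν| ≤ ∫ x, |(f x - c) * (g x - 1)| ∂ν := by
        rw [hdiff]; exact abs_integral_le_integral_abs
    _ ≤ ∫ x, (b - a) / 2 * |g x - 1| ∂ν := by
        refine integral_mono_of_nonneg (ae_of_all _ fun x ↦ abs_nonneg _)
          ((hg_int.sub (integrable_const 1)).abs.const_mul _) (ae_of_all _ fun x ↦ ?_)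
        dsimp only
        rw [abs_mul]
        exact mul_le_mul_of_nonneg_right (hfc x) (abs_nonneg _)
    _ = (b - a) / 2 * ∫ x, |g x - 1| ∂ν := integral_const_mul _ _

theorem abs_integral_sub_integral_le_sqrt_klDiv (hμν : μ ≪ ν) (h_int : Integrable (llr μ ν) μ)
    {f : α → ℝ} (hf : Measurable f) {a b : ℝ} (hab : ∀ x, f x ∈ Icc a b) :
    |∫ x, f x ∂μ - ∫ x, f x ∂ν| ≤ (b - a) / √2 * √((InformationTheory.klDiv μ ν).toReal) := by
  obtain ⟨x₀⟩ := nonempty_of_isProbabilityMeasure μ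
  have hab' : 0 ≤ b - a := by linarith [(hab x₀).1, (hab x₀).2]
  calc |∫ x, f x ∂μ - ∫ x, f x ∂ν|
      ≤ (b - a) / 2 * √(2 * (InformationTheory.klDiv μ ν).toReal) :=
        (abs_integral_sub_integral_le_of_mem_Icc hμν hf hab).trans <| by
          gcongr; exact integral_abs_toReal_rnDeriv_sub_one_le_sqrt_klDiv hμν h_int
    _ = (b - a) / √2 * √((InformationTheory.klDiv μ ν).toReal) := by
        rw [sqrt_mul zero_le_two]
        field_simp
        rw [sq_sqrt zero_le_two]

end

section Midpoint

variable {Ω : Type*} [MeasurableSpace Ω] (P Q : Measure Ω)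

lemma two_smul_midMeasure : (2 : ℝ≥0∞) • midMeasure P Q = P + Q := by
  rw [midMeasure, smul_add, smul_smul, smul_smul,
    ENNReal.mul_inv_cancel two_ne_zero ENNReal.ofNat_ne_top, one_smul, one_smul]

instance inst_s2 [IsProbabilityMeasure P] [IsProbabilityMeasure Q] :
    IsProbabilityMeasure (midMeasure P Q) := by
  constructor
  simp [midMeasure, ENNReal.inv_two_add_inv_two]

end Midpoint

theorem expected_error_le_add_sqrt_klDiv_midpoint_general
    {Ω : Type*} [MeasurableSpace Ω] (P Q : Measure Ω)
    [IsProbabilityMeasure P] [IsProbabilityMeasure Q]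
    (ℓ : Ω → ℝ) (hℓ : Measurable ℓ) (C : ℝ)
    (hℓ0 : ∀ ω, 0 ≤ ℓ ω) (hℓC : ∀ ω, ℓ ω ≤ C) :
    ∫ ω, ℓ ω ∂Q ≤ ∫ ω, ℓ ω ∂P
      + (C / Real.sqrt 2) *
        (Real.sqrt ((klDiv Q (midMeasure P Q)).toReal)
          + Real.sqrt ((klDiv P (midMeasure P Q)).toReal)) := by
  have deviation_le : ∀ μ [IsProbabilityMeasure μ], μ ≤ (2 : ℝ≥0∞) • midMeasure P Q →
      |∫ ω, ℓ ω ∂μ - ∫ ω, ℓ ω ∂midMeasure P Q|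
        ≤ C / √2 * √((klDiv μ (midMeasure P Q)).toReal) := fun μ _ hμ ↦ by
    rw [klDiv_eq_informationTheory_klDiv (by simp)]
    simpa using abs_integral_sub_integral_le_sqrt_klDiv
      (Measure.absolutelyContinuous_of_le_smul hμ)
      (integrable_llr_of_le_smul ENNReal.ofNat_ne_top hμ) hℓ fun ω ↦ ⟨hℓ0 ω, hℓC ω⟩
  have hQ := (abs_le.1 <| deviation_le Q <| two_smul_midMeasure P Q ▸ Measure.le_add_left le_rfl).2
  have hP := (abs_le.1 <| deviation_le P <| two_smul_midMeasure P Q ▸ Measure.le_add_right le_rfl).1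
  linarith

/-- For probability measures `P, Q` with midpoint `M = (1/2)·P + (1/2)·Q` and a measurable
loss `ℓ` with `0 ≤ ℓ ≤ C`,
`∫ ℓ dQ ≤ ∫ ℓ dP + (C/√2) · (√(KL(Q ‖ M)) + √(KL(P ‖ M)))`. -/
theorem expected_error_le_add_sqrt_klDiv_midpoint
    {Ω : Type*} [MeasurableSpace Ω] (P Q : Measure Ω)
    [IsProbabilityMeasure P] [IsProbabilityMeasure Q]
    (ℓ : Ω → ℝ) (hℓ : Measurable ℓ) (C : ℝ) (hC : 0 ≤ C)
    (hℓ0 : ∀ ω, 0 ≤ ℓ ω) (hℓC : ∀ ω, ℓ ω ≤ C) :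
    ∫ ω, ℓ ω ∂Q ≤ ∫ ω, ℓ ω ∂P
      + (C / Real.sqrt 2) *
        (Real.sqrt ((klDiv Q (midMeasure P Q)).toReal)
          + Real.sqrt ((klDiv P (midMeasure P Q)).toReal)) :=
  expected_error_le_add_sqrt_klDiv_midpoint_general P Q ℓ hℓ C hℓ0 hℓC
end

section
/- Let 𝒳 and 𝒵 be standard Borel spaces and let 𝒴 be a finite label set. Let P_s and P_t be probability measures on 𝒳 × 𝒴 and let f : 𝒳 → 𝒵 be measurable. Assume: (i) P_t ≪ P_s with essentially bounded Radon–Nikodym derivative dP_t/dP_s; (ii) covariate shift holds, i.e., there is a Markov kernel κ from 𝒳 to 𝒴 with P_s = P_s^X ⊗ κ and P_t = P_t^X ⊗ κ (a common regular conditional distribution of Y given X); (iii) the representation is sufficient for the source domain: I_{P_s}(Z;Y) = I_{P_s}(X;Y) < ∞. Then covariate shift also holds in representation space: if κ_s and κ_t are Markov kernels from 𝒵 to 𝒴 that are regular conditional distributions of Y given Z under P_s and P_t respectively (i.e., P_s^{Z,Y} = P_s^Z ⊗ κ_s and P_t^{Z,Y} = P_t^Z ⊗ κ_t), then ∫ KL(κ_t(z)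 ‖ κ_s(z)) dP_t^Z(z) = 0; equivalently, κ_t(z) = κ_s(z) for P_t^Z-almost every z. (Appendix Lemma 3.) -/
/-! For finitely many labels the log-likelihood ratio of `μ ⊗ₘ κ` against `μ ⊗ₘ η` is
`log κ x {y} - log η x {y}`. With `Q = μ ⊗ₘ (κs ∘ f)` this splits `I(X;Y) = KL(Ps ‖ μ × ν)` as
`KL(Ps ‖ Q) + I(Z;Y)`: the second summand integrates a function of `(f x, y)`, whose law under
`Ps` is `Ps^{Z,Y}`. Sufficiency forces `KL(Ps ‖ Q) = 0`, i.e. `κ = κs ∘ f` `μ`-a.e. Absolute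
continuity carries this to the target, so `Pt^{Z,Y} = Pt^Z ⊗ₘ κs`, and disintegrations over a
countable label space are unique. -/

open MeasureTheory ProbabilityTheory Real
open scoped ENNReal

lemma klDiv_eq_informationTheory_klDiv_s4 {Ω : Type*} [MeasurableSpace Ω] (P Q : Measure Ω)
    [IsProbabilityMeasure P] [IsProbabilityMeasure Q] :
    klDiv P Q = InformationTheory.klDiv P Q := by
  by_cases h : P ≪ Q ∧ Integrable (llr P Q) P
  · rw [klDiv, if_pos h, InformationTheory.klDiv_of_ac_of_integrable h.1 h.2]
    simp
  · rw [klDiv, if_neg h, eq_comm, InformationTheory.klDiv_eq_top_iff]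
    exact fun hac hint => h ⟨hac, hint⟩

lemma MeasureTheory.Measure.map_compProd_comap {W V Y : Type*} [MeasurableSpace W]
    [MeasurableSpace V] [MeasurableSpace Y] (m : Measure W) [IsFiniteMeasure m] {g : W → V}
    (hg : Measurable g) (η : Kernel V Y) [IsFiniteKernel η] :
    (m ⊗ₘ η.comap g hg).map (fun p => (g p.1, p.2)) = m.map g ⊗ₘ η := by
  have hG : Measurable fun p : W × Y => (g p.1, p.2) :=
    (hg.comp measurable_fst).prodMk measurable_snd
  refine (Measure.ext_prod fun {s t} hs ht => ?_).symm
  rw [Measure.map_apply hG (hs.prod ht)]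
  change _ = (m ⊗ₘ η.comap g hg) ((g ⁻¹' s) ×ˢ t)
  rw [Measure.compProd_apply_prod hs ht, Measure.compProd_apply_prod (hg hs) ht,
    setLIntegral_map hs (η.measurable_coe ht) hg]
  rfl

lemma MeasureTheory.Measure.map_prod_map_left {W V Y : Type*} [MeasurableSpace W]
    [MeasurableSpace V] [MeasurableSpace Y] (m : Measure W) [SFinite m] (ρ : Measure Y) [SFinite ρ]
    {g : W → V} (hg : Measurable g) :
    (m.prod ρ).map (fun p => (g p.1, p.2)) = (m.map g).prod ρ := by
  rw [← Measure.map_id (μ := ρ), Measure.map_prod_map m ρ hg measurable_id, Measure.map_id]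
  rfl

section CountableLabels

variable {W V Y : Type*} [MeasurableSpace W] [MeasurableSpace V] [MeasurableSpace Y]
  [Countable Y] [MeasurableSingletonClass Y]

lemma ProbabilityTheory.Kernel.measurable_apply_singleton (η : Kernel W Y) :
    Measurable fun p : W × Y => η p.1 {p.2} :=
  measurable_from_prod_countable_left fun y => η.measurable_coe (measurableSet_singleton y)

lemma MeasureTheory.Measure.withDensity_singleton_div_eq {μ ν : Measure Y} [IsFiniteMeasure ν]
    (h : μ ≪ ν) :
    ν.withDensity (fun y => μ {y} / ν {y}) = μ := by
  refine Measure.ext_of_singleton fun y => ?_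
  rw [withDensity_apply _ (measurableSet_singleton y), lintegral_singleton]
  by_cases hy : ν {y} = 0
  · rw [hy, mul_zero, h hy]
  · exact ENNReal.div_mul_cancel hy (measure_ne_top ν {y})

lemma ae_compProd_singleton_ne_zero (m : Measure W) [SFinite m] (η : Kernel W Y)
    [IsSFiniteKernel η] :
    ∀ᵐ p ∂(m ⊗ₘ η), η p.1 {p.2} ≠ 0 := by
  rw [Measure.ae_compProd_iff (p := fun p : W × Y => η p.1 {p.2} ≠ 0)
    (η.measurable_apply_singleton (measurableSet_singleton 0).compl)]
  exact ae_of_all _ fun x => ae_iff_of_countable.2 fun _ hy => hy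

lemma absolutelyContinuous_compProd_iff_ae_ne_zero {m : Measure W} [SFinite m]
    {η η' : Kernel W Y} [IsFiniteKernel η] [IsFiniteKernel η'] :
    m ⊗ₘ η ≪ m ⊗ₘ η' ↔ ∀ᵐ p ∂(m ⊗ₘ η), η' p.1 {p.2} ≠ 0 := by
  refine ⟨fun h => h.ae_le (ae_compProd_singleton_ne_zero m η'), fun h => ?_⟩
  rw [Measure.absolutelyContinuous_compProd_right_iff]
  filter_upwards [(Measure.ae_compProd_iff (p := fun p : W × Y => η' p.1 {p.2} ≠ 0)
    (η'.measurable_apply_singleton (measurableSet_singleton 0).compl)).1 h] with x hx s hs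
  rw [ae_iff] at hx
  refine measure_mono_null (fun y hy => ?_) hx
  exact not_not.2 (measure_mono_null (Set.singleton_subset_iff.2 hy) hs)

lemma compProd_eq_withDensity_div {m : Measure W} [IsFiniteMeasure m]
    {η η' : Kernel W Y} [IsFiniteKernel η] [IsFiniteKernel η'] (h : m ⊗ₘ η ≪ m ⊗ₘ η') :
    m ⊗ₘ η = (m ⊗ₘ η').withDensity (fun p => η p.1 {p.2} / η' p.1 {p.2}) := by
  refine Measure.ext_prod fun {s t} hs ht => ?_
  rw [withDensity_apply _ (hs.prod ht), Measure.compProd_apply_prod hs ht,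
    Measure.setLIntegral_compProd (f := fun p => η p.1 {p.2} / η' p.1 {p.2})
      (η.measurable_apply_singleton.div η'.measurable_apply_singleton) hs ht]
  refine setLIntegral_congr_fun_ae hs ?_
  filter_upwards [Measure.absolutelyContinuous_compProd_right_iff.1 h] with x hx _
  rw [← withDensity_apply _ ht, Measure.withDensity_singleton_div_eq hx]

lemma llr_compProd_ae_eq {m : Measure W} [IsFiniteMeasure m]
    {η η' : Kernel W Y} [IsFiniteKernel η] [IsFiniteKernel η'] (h : m ⊗ₘ η ≪ m ⊗ₘ η') :
    llr (m ⊗ₘ η) (m ⊗ₘ η') =ᵐ[m ⊗ₘ η]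
      fun p => log (η p.1 {p.2}).toReal - log (η' p.1 {p.2}).toReal := by
  have hrn : (m ⊗ₘ η).rnDeriv (m ⊗ₘ η') =ᵐ[m ⊗ₘ η'] fun p => η p.1 {p.2} / η' p.1 {p.2} := by
    conv_lhs => rw [compProd_eq_withDensity_div h]
    exact Measure.rnDeriv_withDensity _
      (η.measurable_apply_singleton.div η'.measurable_apply_singleton)
  filter_upwards [h.ae_le hrn, ae_compProd_singleton_ne_zero m η,
    absolutelyContinuous_compProd_iff_ae_ne_zero.1 h] with p hp hη hη'
  rw [llr, hp, ENNReal.toReal_div, log_div (ENNReal.toReal_ne_zero.2 ⟨hη, measure_ne_top _ _⟩)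
    (ENNReal.toReal_ne_zero.2 ⟨hη', measure_ne_top _ _⟩)]

variable {m : Measure W} [IsFiniteMeasure m] {η : Kernel W Y} {g : W → V} (hg : Measurable g)
  {η' : Kernel V Y}

lemma absolutelyContinuous_compProd_comap_of_map_eq [IsFiniteKernel η] [IsFiniteKernel η']
    (hmap : (m ⊗ₘ η).map (fun p => (g p.1, p.2)) = m.map g ⊗ₘ η') :
    m ⊗ₘ η ≪ m ⊗ₘ η'.comap g hg := by
  have hG : Measurable fun p : W × Y => (g p.1, p.2) :=
    (hg.comp measurable_fst).prodMk measurable_snd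
  exact absolutelyContinuous_compProd_iff_ae_ne_zero.2 <| ae_of_ae_map hG.aemeasurable <|
    (ae_compProd_singleton_ne_zero (m.map g) η').filter_mono (congrArg ae hmap).le

lemma llr_compProd_prod_ae_eq_add [IsFiniteKernel η] [IsFiniteKernel η']
    (hmap : (m ⊗ₘ η).map (fun p => (g p.1, p.2)) = m.map g ⊗ₘ η')
    {ρ : Measure Y} [IsFiniteMeasure ρ] (hac : m ⊗ₘ η ≪ m.prod ρ) :
    llr (m ⊗ₘ η) (m.prod ρ) =ᵐ[m ⊗ₘ η] fun p =>
      llr (m ⊗ₘ η) (m ⊗ₘ η'.comap g hg) p +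
        llr (m.map g ⊗ₘ η') ((m.map g).prod ρ) (g p.1, p.2) := by
  have hG : Measurable fun p : W × Y => (g p.1, p.2) :=
    (hg.comp measurable_fst).prodMk measurable_snd
  have hacZ : m.map g ⊗ₘ η' ≪ (m.map g).prod ρ :=
    hmap ▸ Measure.map_prod_map_left m ρ hg ▸ hac.map hG
  have hX := llr_compProd_ae_eq (m := m) (η := η) (η' := Kernel.const W ρ)
    (by rwa [Measure.compProd_const])
  have hZ := llr_compProd_ae_eq (m := m.map g) (η := η') (η' := Kernel.const V ρ)
    (by rwa [Measure.compProd_const])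
  rw [Measure.compProd_const] at hX hZ
  filter_upwards [hX, llr_compProd_ae_eq (absolutelyContinuous_compProd_comap_of_map_eq hg hmap),
    ae_of_ae_map hG.aemeasurable (hZ.filter_mono (congrArg ae hmap).le)] with p hX hQ hZ
  rw [hX, hQ, hZ]
  simp only [Kernel.const_apply, Kernel.comap_apply]
  ring

theorem klDiv_compProd_prod_eq_add [IsMarkovKernel η] [IsMarkovKernel η']
    (hmap : (m ⊗ₘ η).map (fun p => (g p.1, p.2)) = m.map g ⊗ₘ η')
    {ρ : Measure Y} [IsFiniteMeasure ρ]
    (hfin : InformationTheory.klDiv (m ⊗ₘ η) (m.prod ρ) ≠ ∞) :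
    InformationTheory.klDiv (m ⊗ₘ η) (m.prod ρ) =
      InformationTheory.klDiv (m ⊗ₘ η) (m ⊗ₘ η'.comap g hg) +
        InformationTheory.klDiv (m.map g ⊗ₘ η') ((m.map g).prod ρ) := by
  have hG : Measurable fun p : W × Y => (g p.1, p.2) :=
    (hg.comp measurable_fst).prodMk measurable_snd
  obtain ⟨hac, hint⟩ := InformationTheory.klDiv_ne_top_iff.1 hfin
  have hacQ := absolutelyContinuous_compProd_comap_of_map_eq hg hmap
  have hacZ : m.map g ⊗ₘ η' ≪ (m.map g).prod ρ :=
    hmap ▸ Measure.map_prod_map_left m ρ hg ▸ hac.map hG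
  have hintZ : Integrable (llr (m.map g ⊗ₘ η') ((m.map g).prod ρ)) (m.map g ⊗ₘ η') := by
    have := InformationTheory.integrable_llr_map hac hG hint
    rwa [hmap, Measure.map_prod_map_left m ρ hg] at this
  have hintZG : Integrable (fun p => llr (m.map g ⊗ₘ η') ((m.map g).prod ρ) (g p.1, p.2))
      (m ⊗ₘ η) :=
    (integrable_map_measure (g := llr (m.map g ⊗ₘ η') ((m.map g).prod ρ))
      (hmap ▸ hintZ.aestronglyMeasurable) hG.aemeasurable).1 (hmap ▸ hintZ)
  have hintZG_eq : ∫ p, llr (m.map g ⊗ₘ η') ((m.map g).prod ρ) (g p.1, p.2) ∂(m ⊗ₘ η)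
      = ∫ q, llr (m.map g ⊗ₘ η') ((m.map g).prod ρ) q ∂(m.map g ⊗ₘ η') := by
    rw [← hmap, integral_map hG.aemeasurable (hmap ▸ hintZ.aestronglyMeasurable)]
  have hsplit := llr_compProd_prod_ae_eq_add hg hmap hac
  have hintQ : Integrable (llr (m ⊗ₘ η) (m ⊗ₘ η'.comap g hg)) (m ⊗ₘ η) :=
    (hint.sub hintZG).congr (hsplit.mono fun p hp => by simp only [Pi.sub_apply, hp]; ring)
  rw [InformationTheory.klDiv_of_ac_of_integrable hac hint,
    InformationTheory.klDiv_of_ac_of_integrable hacQ hintQ,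
    InformationTheory.klDiv_of_ac_of_integrable hacZ hintZ,
    ← ENNReal.ofReal_add (InformationTheory.integral_llr_add_sub_measure_univ_nonneg hacQ hintQ)
      (InformationTheory.integral_llr_add_sub_measure_univ_nonneg hacZ hintZ),
    integral_congr_ae hsplit, integral_add hintQ hintZG, hintZG_eq]
  simp only [measureReal_def, Measure.compProd_apply_univ, Measure.map_apply hg .univ,
    Set.preimage_univ]
  simp only [← Set.univ_prod_univ, Measure.prod_prod, Measure.map_apply hg .univ, Set.preimage_univ]
  ring_nf

end CountableLabels

theorem covariate_shift_in_representation_space_general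
    {X Z : Type*} [MeasurableSpace X]
    [MeasurableSpace Z]
    {Y : Type*} [Fintype Y] [MeasurableSpace Y] [MeasurableSingletonClass Y]
    (Ps Pt : Measure (X × Y)) [IsProbabilityMeasure Ps] [IsProbabilityMeasure Pt]
    (f : X → Z) (hf : Measurable f)
    -- (i) absolute continuity with essentially bounded density ratio
    (hac : Pt ≪ Ps)
    -- (ii) covariate shift: a common regular conditional distribution of Y given X
    (κ : Kernel X Y) [IsMarkovKernel κ]
    (hs : Ps = (Ps.map Prod.fst) ⊗ₘ κ) (ht : Pt = (Pt.map Prod.fst) ⊗ₘ κ)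
    -- (iii) sufficiency of the representation: I(Z;Y) = I(X;Y) < ∞ under the source
    (hsuff : klDiv (Ps.map (fun p => (f p.1, p.2)))
        ((Ps.map (fun p => f p.1)).prod (Ps.map Prod.snd))
      = klDiv Ps ((Ps.map Prod.fst).prod (Ps.map Prod.snd)))
    (hfin : klDiv Ps ((Ps.map Prod.fst).prod (Ps.map Prod.snd)) ≠ ∞)
    -- regular conditional distributions of Y given Z under source and target
    (κs κt : Kernel Z Y) [IsMarkovKernel κs] [IsMarkovKernel κt]
    (hks : Ps.map (fun p => (f p.1, p.2)) = (Ps.map (fun p => f p.1)) ⊗ₘ κs)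
    (hkt : Pt.map (fun p => (f p.1, p.2)) = (Pt.map (fun p => f p.1)) ⊗ₘ κt) :
    (∫⁻ z, klDiv (κt z) (κs z) ∂(Pt.map (fun p => f p.1))) = 0 ∧
      ∀ᵐ z ∂(Pt.map (fun p => f p.1)), κt z = κs z := by
  set μ := Ps.map Prod.fst
  set ν := Ps.map Prod.snd
  have : IsProbabilityMeasure μ := Measure.isProbabilityMeasure_map measurable_fst.aemeasurable
  have : IsProbabilityMeasure ν := Measure.isProbabilityMeasure_map measurable_snd.aemeasurable
  have : IsProbabilityMeasure (μ.map f) := Measure.isProbabilityMeasure_map hf.aemeasurable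
  have hZ (P : Measure (X × Y)) : P.map (fun p => f p.1) = (P.map Prod.fst).map f :=
    (Measure.map_map hf measurable_fst).symm
  have hμZ : Ps.map (fun p => f p.1) = μ.map f := hZ Ps
  rw [hks, hμZ, klDiv_eq_informationTheory_klDiv_s4, klDiv_eq_informationTheory_klDiv_s4, hs] at hsuff
  rw [klDiv_eq_informationTheory_klDiv_s4, hs] at hfin
  have hsplit := klDiv_compProd_prod_eq_add hf (by rw [← hs, hks, hμZ]) hfin
  rw [hsuff] at hsplit
  have hκ : κ =ᵐ[μ] κs.comap f hf :=
    Kernel.ae_eq_of_compProd_eq <| InformationTheory.klDiv_eq_zero_iff.1 <|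
      (ENNReal.add_left_inj hfin).1 (hsplit.symm.trans (zero_add _).symm)
  have htarget : Pt.map (fun p => (f p.1, p.2)) = Pt.map (fun p => f p.1) ⊗ₘ κs := by
    rw [hZ, ← Measure.map_compProd_comap _ hf,
      ← Measure.compProd_congr ((hac.map measurable_fst).ae_eq hκ), ← ht]
  have hκts := Kernel.ae_eq_of_compProd_eq (hkt.symm.trans htarget)
  refine ⟨(lintegral_congr_ae ?_).trans lintegral_zero, hκts⟩
  filter_upwards [hκts] with z hz
  rw [hz, klDiv_eq_informationTheory_klDiv_s4, InformationTheory.klDiv_self]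

/-- Appendix Lemma 3: under covariate shift with a bounded density ratio and a representation
that is sufficient for the source domain, covariate shift also holds in representation space:
the regular conditional distributions of the label given the representation agree
`P_t^Z`-almost everywhere. -/
theorem covariate_shift_in_representation_space
    {X Z : Type*} [MeasurableSpace X] [StandardBorelSpace X]
    [MeasurableSpace Z] [StandardBorelSpace Z]
    {Y : Type*} [Fintype Y] [MeasurableSpace Y] [MeasurableSingletonClass Y]
    (Ps Pt : Measure (X × Y)) [IsProbabilityMeasure Ps] [IsProbabilityMeasure Pt]
    (f : X → Z) (hf : Measurable f)
    -- (i) absolute continuity with essentially bounded density ratio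
    (hac : Pt ≪ Ps)
    (hbdd : ∃ B : ℝ≥0∞, B ≠ ∞ ∧ ∀ᵐ ω ∂Ps, Pt.rnDeriv Ps ω ≤ B)
    -- (ii) covariate shift: a common regular conditional distribution of Y given X
    (κ : Kernel X Y) [IsMarkovKernel κ]
    (hs : Ps = (Ps.map Prod.fst) ⊗ₘ κ) (ht : Pt = (Pt.map Prod.fst) ⊗ₘ κ)
    -- (iii) sufficiency of the representation: I(Z;Y) = I(X;Y) < ∞ under the source
    (hsuff : klDiv (Ps.map (fun p => (f p.1, p.2)))
        ((Ps.map (fun p => f p.1)).prod (Ps.map Prod.snd))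
      = klDiv Ps ((Ps.map Prod.fst).prod (Ps.map Prod.snd)))
    (hfin : klDiv Ps ((Ps.map Prod.fst).prod (Ps.map Prod.snd)) ≠ ∞)
    -- regular conditional distributions of Y given Z under source and target
    (κs κt : Kernel Z Y) [IsMarkovKernel κs] [IsMarkovKernel κt]
    (hks : Ps.map (fun p => (f p.1, p.2)) = (Ps.map (fun p => f p.1)) ⊗ₘ κs)
    (hkt : Pt.map (fun p => (f p.1, p.2)) = (Pt.map (fun p => f p.1)) ⊗ₘ κt) :
    (∫⁻ z, klDiv (κt z) (κs z) ∂(Pt.map (fun p => f p.1))) = 0 ∧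
      ∀ᵐ z ∂(Pt.map (fun p => f p.1)), κt z = κs z :=
  covariate_shift_in_representation_space_general Ps Pt f hf hac κ hs ht hsuff hfin κs κt hks hkt
end
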